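/- Let V_i ∈ ℝ^{p_i×k} and V_j ∈ ℝ^{p_j×k} have orthonormal columns, A ∈ ℝ^{p_i×p_j}, ρ > 0, λ ≥ 0, and weights w_1, …, w_k ≥ 0. Then the diagonal matrix D* with D*^{(l,l)} = ST_{λ w_l / ρ}(M^{(l,l)}), where M = V_i^⊤ A V_j, is a minimizer over all diagonal matrices D ∈ ℝ^{k×k} of the objective (ρ/2)‖A − V_i D V_j^⊤‖_F² + λ Σ_{l=1}^{k} w_l |D^{(l,l)}|. -/
import Mathlib


open Matrix

/-- Squared Frobenius norm of a real matrix. -/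
noncomputable def frobSq {m n : ℕ} (A : Matrix (Fin m) (Fin n) ℝ) : ℝ :=
  ∑ i, ∑ j, (A i j) ^ 2

/-- The soft-thresholding operator `ST_β(x) = sign(x) · max(|x| − β, 0)`. -/
noncomputable def softThresh (β x : ℝ) : ℝ := Real.sign x * max (|x| - β) 0

lemma frobSq_eq_trace {m n : ℕ} (B : Matrix (Fin m) (Fin n) ℝ) :
    frobSq B = (B * Bᵀ).trace := by
  simp [frobSq, Matrix.trace, Matrix.mul_apply, Matrix.diag, sq]

lemma scalar_st (β m x : ℝ) (hβ : 0 ≤ β) :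
    (softThresh β m - m)^2 / 2 + β * |softThresh β m| ≤ (x - m)^2 / 2 + β * |x| := by
  have h2 : β * (-x) ≤ β * |x| :=
    mul_le_mul_of_nonneg_left (by linarith [neg_abs_le x]) hβ
  have h3 : β * x ≤ β * |x| := mul_le_mul_of_nonneg_left (le_abs_self x) hβ
  unfold softThresh
  rcases lt_trichotomy m 0 with hm|hm|hm
  · rw [Real.sign_of_neg hm, abs_of_neg hm]
    rcases le_or_gt (-m - β) 0 with h|h
    · rw [max_eq_right h]
      simp only [mul_zero, zero_sub, abs_zero]
      have h1 : m * x ≤ β * |x| := by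
        calc m * x ≤ |m * x| := le_abs_self _
          _ = |m| * |x| := abs_mul m x
          _ ≤ β * |x| := mul_le_mul_of_nonneg_right
                (by rw [abs_of_neg hm]; linarith) (abs_nonneg x)
      nlinarith [sq_nonneg x]
    · rw [max_eq_left h.le]
      have hs : -1 * (-m - β) = m + β := by ring
      rw [hs, abs_of_neg (by linarith : m + β < 0)]
      nlinarith [sq_nonneg (x - m - β)]
  · subst hm
    simp only [Real.sign_zero, zero_mul, zero_sub, abs_zero, mul_zero]
    nlinarith [abs_nonneg x, sq_nonneg x]
  · rw [Real.sign_of_pos hm, abs_of_pos hm]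
    rcases le_or_gt (m - β) 0 with h|h
    · rw [max_eq_right h]
      simp only [mul_zero, zero_sub, abs_zero]
      have h1 : m * x ≤ β * |x| := by
        calc m * x ≤ |m * x| := le_abs_self _
          _ = |m| * |x| := abs_mul m x
          _ ≤ β * |x| := mul_le_mul_of_nonneg_right
                (by rw [abs_of_pos hm]; linarith) (abs_nonneg x)
      nlinarith [sq_nonneg x]
    · rw [max_eq_left h.le, one_mul, abs_of_pos (by linarith : (0:ℝ) < m - β)]
      nlinarith [sq_nonneg (x - m + β)]

lemma frob_expand {pi pj k : ℕ}
    (Vi : Matrix (Fin pi) (Fin k) ℝ) (Vj : Matrix (Fin pj) (Fin k) ℝ)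
    (A : Matrix (Fin pi) (Fin pj) ℝ)
    (hVi : Viᵀ * Vi = 1) (hVj : Vjᵀ * Vj = 1)
    (D : Matrix (Fin k) (Fin k) ℝ) (hD : D.IsDiag) :
    frobSq (A - Vi * D * Vjᵀ)
      = frobSq A + ∑ l, ((D l l)^2 - 2 * D l l * ((Viᵀ * A * Vj) l l)) := by
  have hXX : (Vi * D * Vjᵀ) * (Vi * D * Vjᵀ)ᵀ = Vi * (D * Dᵀ) * Viᵀ := by
    rw [Matrix.transpose_mul, Matrix.transpose_mul, Matrix.transpose_transpose]
    calc Vi * D * Vjᵀ * (Vjᵀᵀ * (Dᵀ * Viᵀ))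
        = Vi * D * (Vjᵀ * Vj) * (Dᵀ * Viᵀ) := by
          rw [Matrix.transpose_transpose]; simp only [Matrix.mul_assoc]
      _ = Vi * (D * Dᵀ) * Viᵀ := by rw [hVj, Matrix.mul_one]; simp only [Matrix.mul_assoc]
  have htXX : (Vi * (D * Dᵀ) * Viᵀ).trace = (D * Dᵀ).trace := by
    rw [Matrix.trace_mul_comm (Vi * (D * Dᵀ)) Viᵀ, ← Matrix.mul_assoc, hVi, Matrix.one_mul]
  have hAX : (A * (Vi * D * Vjᵀ)ᵀ).trace = ((Viᵀ * A * Vj) * Dᵀ).trace := by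
    rw [Matrix.transpose_mul, Matrix.transpose_mul, Matrix.transpose_transpose]
    have : A * (Vj * (Dᵀ * Viᵀ)) = (A * Vj * Dᵀ) * Viᵀ := by
      simp only [Matrix.mul_assoc]
    rw [this, Matrix.trace_mul_comm (A * Vj * Dᵀ) Viᵀ]
    simp only [Matrix.mul_assoc]
  have hMD : ((Viᵀ * A * Vj) * Dᵀ).trace = ∑ l, ((Viᵀ * A * Vj) l l * D l l) := by
    rw [Matrix.trace]
    refine Finset.sum_congr rfl fun l _ => ?_
    rw [Matrix.diag, Matrix.mul_apply]
    refine Finset.sum_eq_single l (fun j _ hj => ?_) (by simp)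
    rw [Matrix.transpose_apply, hD (Ne.symm hj), mul_zero]
  have hDD : (D * Dᵀ).trace = ∑ l, (D l l)^2 := by
    rw [Matrix.trace]
    refine Finset.sum_congr rfl fun l _ => ?_
    rw [Matrix.diag, Matrix.mul_apply,
      Finset.sum_eq_single l
        (fun j _ hj => by rw [Matrix.transpose_apply, hD (Ne.symm hj), mul_zero])
        (fun h => absurd (Finset.mem_univ l) h),
      Matrix.transpose_apply, sq]
  have hXA : ((Vi * D * Vjᵀ) * Aᵀ).trace = ((Viᵀ * A * Vj) * Dᵀ).trace := by
    have : (Vi * D * Vjᵀ) * Aᵀ = (A * (Vi * D * Vjᵀ)ᵀ)ᵀ := by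
      rw [Matrix.transpose_mul, Matrix.transpose_transpose]
    rw [this, Matrix.trace_transpose, hAX]
  rw [frobSq_eq_trace, frobSq_eq_trace]
  rw [Matrix.transpose_sub, Matrix.sub_mul, Matrix.mul_sub, Matrix.mul_sub,
    Matrix.trace_sub, Matrix.trace_sub, Matrix.trace_sub, hXX, htXX, hDD, hAX, hXA, hMD]
  simp only [Finset.sum_sub_distrib]
  have h2 : ∑ l, 2 * D l l * ((Viᵀ * A * Vj) l l)
      = 2 * ∑ l, (Viᵀ * A * Vj) l l * D l l := by
    rw [Finset.mul_sum]; exact Finset.sum_congr rfl fun l _ => by ring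
  rw [h2]; ring

/-- ADMM subproblem for the singular value matrix: the diagonal matrix obtained
by soft-thresholding the diagonal of `M = Viᵀ A Vj` with thresholds `λ wₗ / ρ`
minimizes `(ρ/2)‖A − Vi D Vjᵀ‖_F² + λ ∑ₗ wₗ |D^{(l,l)}|` over all diagonal `D`. -/
theorem admm_subproblem_singular_values {pi pj k : ℕ}
    (Vi : Matrix (Fin pi) (Fin k) ℝ) (Vj : Matrix (Fin pj) (Fin k) ℝ)
    (A : Matrix (Fin pi) (Fin pj) ℝ) (ρ lam : ℝ) (w : Fin k → ℝ)
    (hVi : Viᵀ * Vi = 1) (hVj : Vjᵀ * Vj = 1)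
    (hρ : 0 < ρ) (hlam : 0 ≤ lam) (hw : ∀ l, 0 ≤ w l) :
    ∀ D : Matrix (Fin k) (Fin k) ℝ, D.IsDiag →
      ρ / 2 * frobSq (A - Vi * Matrix.diagonal
            (fun l => softThresh (lam * w l / ρ) ((Viᵀ * A * Vj) l l)) * Vjᵀ)
          + lam * ∑ l, w l * |softThresh (lam * w l / ρ) ((Viᵀ * A * Vj) l l)|
        ≤ ρ / 2 * frobSq (A - Vi * D * Vjᵀ) + lam * ∑ l, w l * |D l l| := by
  intro D hD
  set M : Matrix (Fin k) (Fin k) ℝ := Viᵀ * A * Vj with hM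
  set s : Fin k → ℝ := fun l => softThresh (lam * w l / ρ) (M l l) with hs
  have hSd : (Matrix.diagonal s).IsDiag := Matrix.isDiag_diagonal s
  rw [frob_expand Vi Vj A hVi hVj _ hSd, frob_expand Vi Vj A hVi hVj D hD]
  simp only [Matrix.diagonal_apply_eq]
  have key : ∀ l : Fin k,
      ρ / 2 * ((s l)^2 - 2 * s l * M l l) + lam * (w l * |s l|)
        ≤ ρ / 2 * ((D l l)^2 - 2 * D l l * M l l) + lam * (w l * |D l l|) := by
    intro l
    have hwl := hw l
    have hβ : 0 ≤ lam * w l / ρ := by positivity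
    have h1 := scalar_st (lam * w l / ρ) (M l l) (D l l) hβ
    have h2 := mul_le_mul_of_nonneg_left h1 hρ.le
    have hρ0 : ρ ≠ 0 := ne_of_gt hρ
    have e1 : ρ * ((s l - M l l)^2/2 + (lam * w l / ρ) * |s l|)
        = ρ/2*((s l)^2 - 2*(s l)*(M l l)) + ρ/2*(M l l)^2 + lam*(w l*|s l|) := by
      field_simp; ring
    have e2 : ρ * ((D l l - M l l)^2/2 + (lam * w l / ρ) * |D l l|)
        = ρ/2*((D l l)^2 - 2*(D l l)*(M l l)) + ρ/2*(M l l)^2 + lam*(w l*|D l l|) := by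
      field_simp; ring
    rw [e1, e2] at h2
    linarith
  have hsum := Finset.sum_le_sum (fun l (_ : l ∈ Finset.univ) => key l)
  rw [Finset.sum_add_distrib, Finset.sum_add_distrib] at hsum
  rw [← Finset.mul_sum, ← Finset.mul_sum, ← Finset.mul_sum, ← Finset.mul_sum] at hsum
  nlinarith [hsum]
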